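/- For n ∈ ℕ, nonnegative reals α, β, k with 0 ≤ α ≤ β, every continuous f : [0,1] → ℝ, and every x ∈ [0,1], one has |K_n^{(α,β,k)}(f;x) − f(x)| ≤ 2·ω(f; √(K_n^{(α,β,k)}((e₁−x)²;x))), where ω(f,δ) = sup{|f(t)−f(x)| : x,t ∈ [0,1], |t−x| ≤ δ}. -/

import Mathlib

open Finset Filter

/-- Pochhammer k-symbol: `(λ)_{m,k} = λ(λ+k)⋯(λ+(m-1)k)`. -/
noncomputable def pochK (lam k : ℝ) (m : ℕ) : ℝ :=
  ∏ i ∈ Finset.range m, (lam + i * k)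

/-- Lupaş-type operator based on Polya distribution with Pochhammer k-symbol. -/
noncomputable def LupasP (n : ℕ) (k : ℝ) (f : ℝ → ℝ) (x : ℝ) : ℝ :=
  (1 / pochK n k n) * ∑ m ∈ Finset.range (n + 1),
    (n.choose m : ℝ) * pochK (n * x) k m * pochK (n - n * x) k (n - m) * f (m / n)

/-- Kantorovich-Stancu modification of the Lupaş-type operator. -/
noncomputable def KantK (n : ℕ) (α β k : ℝ) (f : ℝ → ℝ) (x : ℝ) : ℝ :=
  ((n + β + 1) / pochK n k n) * ∑ m ∈ Finset.range (n + 1),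
    (n.choose m : ℝ) * pochK (n * x) k m * pochK (n - n * x) k (n - m) *
      ∫ t in ((m + α) / (n + β + 1))..((m + α + 1) / (n + β + 1)), f t

/-- Modulus of continuity of `f` on `[0,1]`. -/
noncomputable def modulus (f : ℝ → ℝ) (δ : ℝ) : ℝ :=
  sSup {y | ∃ x t : ℝ, x ∈ Set.Icc (0:ℝ) 1 ∧ t ∈ Set.Icc (0:ℝ) 1 ∧
    |t - x| ≤ δ ∧ y = |f t - f x|}

lemma pochK_zero (lam k : ℝ) : pochK lam k 0 = 1 := by simp [pochK]

lemma pochK_succ (lam k : ℝ) (m : ℕ) :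
    pochK lam k (m+1) = pochK lam k m * (lam + m * k) := by
  simp [pochK, Finset.prod_range_succ]

lemma pochK_nonneg {lam k : ℝ} (h : 0 ≤ lam) (hk : 0 ≤ k) (m : ℕ) :
    0 ≤ pochK lam k m := by
  apply Finset.prod_nonneg; intro i _; positivity

lemma pochK_pos {lam k : ℝ} (h : 0 < lam) (hk : 0 ≤ k) (m : ℕ) :
    0 < pochK lam k m := by
  apply Finset.prod_pos; intro i _; positivity

lemma pochK_vandermonde (k a b : ℝ) (n : ℕ) :
    ∑ m ∈ Finset.range (n+1),
      (n.choose m : ℝ) * pochK a k m * pochK b k (n - m) = pochK (a+b) k n := by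
  induction n with
  | zero => simp [pochK]
  | succ n ih =>
    set g : ℕ → ℝ := fun m => (n.choose m : ℝ) * pochK a k m * pochK b k (n+1 - m) with hg
    have shift := Finset.sum_range_succ' g (n+1)
    have last := Finset.sum_range_succ g (n+1)
    have glast : g (n+1) = 0 := by simp [hg, Nat.choose_succ_self]
    have g0 : g 0 = pochK b k (n+1) := by simp [hg, pochK_zero]
    have split : ∑ m ∈ Finset.range (n+2),
        ((n+1).choose m : ℝ) * pochK a k m * pochK b k (n+1 - m)
        = (∑ m ∈ Finset.range (n+1), g m)
        + ∑ m ∈ Finset.range (n+1),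
            (n.choose m : ℝ) * pochK a k (m+1) * pochK b k (n - m) := by
      rw [Finset.sum_range_succ' (fun m => ((n+1).choose m : ℝ) * pochK a k m * pochK b k (n+1 - m)) (n+1)]
      have e1 : ∀ m ∈ Finset.range (n+1),
          ((n+1).choose (m+1) : ℝ) * pochK a k (m+1) * pochK b k (n+1 - (m+1))
          = (n.choose m : ℝ) * pochK a k (m+1) * pochK b k (n - m) + g (m+1) := by
        intro m hm
        have h2 : n + 1 - (m+1) = n - m := by omega
        rw [Nat.choose_succ_succ, hg]
        simp only [h2]
        push_cast; ring
      rw [Finset.sum_congr rfl e1, Finset.sum_add_distrib]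
      have : ((n+1).choose 0 : ℝ) * pochK a k 0 * pochK b k (n+1-0) = g 0 := by
        simp [hg, pochK_zero]
      rw [this]
      linarith [shift, last, glast]
    rw [split]
    have e3 : ∀ m ∈ Finset.range (n+1),
        g m = (n.choose m : ℝ) * pochK a k m * pochK b k (n - m) * (b + ((n:ℝ) - m) * k) := by
      intro m hm
      simp only [Finset.mem_range] at hm
      have h1 : n + 1 - m = (n - m) + 1 := by omega
      have h2 : ((n - m : ℕ) : ℝ) = (n : ℝ) - m := by rw [Nat.cast_sub (by omega)]
      rw [hg]; simp only [h1, pochK_succ, h2]; ring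
    have e4 : ∀ m ∈ Finset.range (n+1),
        (n.choose m : ℝ) * pochK a k (m+1) * pochK b k (n - m)
        = (n.choose m : ℝ) * pochK a k m * pochK b k (n - m) * (a + m * k) := by
      intro m hm; rw [pochK_succ]; ring
    rw [Finset.sum_congr rfl e3, Finset.sum_congr rfl e4, ← Finset.sum_add_distrib]
    have e5 : ∀ m ∈ Finset.range (n+1),
        (n.choose m : ℝ) * pochK a k m * pochK b k (n - m) * (b + ((n:ℝ) - m) * k)
        + (n.choose m : ℝ) * pochK a k m * pochK b k (n - m) * (a + m * k)
        = ((n.choose m : ℝ) * pochK a k m * pochK b k (n - m)) * (a + b + n * k) := by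
      intro m hm; ring
    rw [Finset.sum_congr rfl e5, ← Finset.sum_mul, ih, pochK_succ]

lemma modulus_bddAbove (f : ℝ → ℝ) (hf : ContinuousOn f (Set.Icc (0:ℝ) 1)) (δ : ℝ) :
    BddAbove {y | ∃ x t : ℝ, x ∈ Set.Icc (0:ℝ) 1 ∧ t ∈ Set.Icc (0:ℝ) 1 ∧
      |t - x| ≤ δ ∧ y = |f t - f x|} := by
  obtain ⟨M, hM⟩ := isCompact_Icc.exists_bound_of_continuousOn hf
  refine ⟨2 * M, ?_⟩
  rintro y ⟨a, t, ha, ht, -, rfl⟩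
  have := hM t ht
  have := hM a ha
  calc |f t - f a| ≤ |f t| + |f a| := abs_sub _ _
    _ ≤ 2 * M := by simp only [Real.norm_eq_abs] at *; linarith

lemma abs_sub_le_modulus (f : ℝ → ℝ) (hf : ContinuousOn f (Set.Icc (0:ℝ) 1))
    {a t δ : ℝ} (ha : a ∈ Set.Icc (0:ℝ) 1) (ht : t ∈ Set.Icc (0:ℝ) 1)
    (h : |t - a| ≤ δ) : |f t - f a| ≤ modulus f δ :=
  le_csSup (modulus_bddAbove f hf δ) ⟨a, t, ha, ht, h, rfl⟩

lemma modulus_nonneg (f : ℝ → ℝ) (hf : ContinuousOn f (Set.Icc (0:ℝ) 1))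
    {δ : ℝ} (hδ : 0 ≤ δ) : 0 ≤ modulus f δ := by
  have := abs_sub_le_modulus f hf (a := 0) (t := 0) (by simp) (by simp) (by simpa using hδ)
  simpa using this

lemma key_pointwise (f : ℝ → ℝ) (hf : ContinuousOn f (Set.Icc (0:ℝ) 1))
    {x t δ : ℝ} (hx : x ∈ Set.Icc (0:ℝ) 1) (ht : t ∈ Set.Icc (0:ℝ) 1) (hδ : 0 < δ) :
    |f t - f x| ≤ (1 + (t-x)^2/δ^2) * modulus f δ := by
  have hω := modulus_nonneg f hf hδ.le
  have hfac : (1:ℝ) ≤ 1 + (t-x)^2/δ^2 := by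
    have : (0:ℝ) ≤ (t-x)^2/δ^2 := by positivity
    linarith
  rcases le_or_gt |t - x| δ with hle | hgt
  · calc |f t - f x| ≤ modulus f δ := abs_sub_le_modulus f hf hx ht hle
      _ = 1 * modulus f δ := (one_mul _).symm
      _ ≤ (1 + (t-x)^2/δ^2) * modulus f δ := by
        apply mul_le_mul_of_nonneg_right hfac hω
  · set N : ℕ := ⌈|t - x| / δ⌉₊ with hN
    have hr : (1:ℝ) < |t - x| / δ := by
      rw [lt_div_iff₀ hδ]; linarith
    have hN1 : 1 ≤ N := by
      rw [hN]; exact Nat.one_le_ceil_iff.mpr (by linarith)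
    have hNpos : (0:ℝ) < N := by exact_mod_cast hN1
    set h : ℝ := (t - x) / N with hh
    set p : ℕ → ℝ := fun i => x + i * h with hp
    have hp0 : p 0 = x := by simp [hp]
    have hpN : p N = t := by
      simp only [hp, hh]
      field_simp
      ring
    have hpmem : ∀ i ≤ N, p i ∈ Set.Icc (0:ℝ) 1 := by
      intro i hi
      have hθ0 : (0:ℝ) ≤ (i:ℝ)/N := by positivity
      have hθ1 : (i:ℝ)/N ≤ 1 := by
        rw [div_le_one hNpos]; exact_mod_cast hi
      have hpi : p i = x + ((i:ℝ)/N) * (t - x) := by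
        simp only [hp, hh]; ring
      obtain ⟨hx0, hx1⟩ := hx
      obtain ⟨ht0, ht1⟩ := ht
      rw [hpi]
      constructor
      · rcases le_total x t with hc | hc <;> nlinarith
      · rcases le_total x t with hc | hc <;> nlinarith
    have hstep : ∀ i < N, |f (p (i+1)) - f (p i)| ≤ modulus f δ := by
      intro i hi
      have : |p (i+1) - p i| ≤ δ := by
        have : p (i+1) - p i = h := by simp only [hp]; push_cast; ring
        rw [this, hh, abs_div, abs_of_pos hNpos, div_le_iff₀ hNpos]
        have := Nat.le_ceil (|t - x| / δ)
        rw [← hN] at this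
        calc |t - x| = (|t-x|/δ) * δ := by field_simp
          _ ≤ (N:ℝ) * δ := by
            apply mul_le_mul_of_nonneg_right this hδ.le
          _ = δ * N := by ring
      exact abs_sub_le_modulus f hf (hpmem i (by omega)) (hpmem (i+1) (by omega)) this
    have tele : f t - f x = ∑ i ∈ Finset.range N, (f (p (i+1)) - f (p i)) := by
      rw [Finset.sum_range_sub (fun i => f (p i)) N, hp0, hpN]
    have hsum : |f t - f x| ≤ (N:ℝ) * modulus f δ := by
      rw [tele]
      calc |∑ i ∈ Finset.range N, (f (p (i+1)) - f (p i))|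
          ≤ ∑ i ∈ Finset.range N, |f (p (i+1)) - f (p i)| := Finset.abs_sum_le_sum_abs _ _
        _ ≤ ∑ i ∈ Finset.range N, modulus f δ := by
            apply Finset.sum_le_sum
            intro i hi
            exact hstep i (Finset.mem_range.mp hi)
        _ = (N:ℝ) * modulus f δ := by simp [mul_comm]
    have hNle : (N:ℝ) ≤ 1 + (t-x)^2/δ^2 := by
      have h1 : (N:ℝ) < |t - x| / δ + 1 := by
        rw [hN]; exact Nat.ceil_lt_add_one (by positivity)
      have h2 : |t - x| / δ ≤ (t-x)^2/δ^2 := by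
        have h3 : |t - x| / δ ≤ (|t-x|/δ)^2 := by nlinarith
        calc |t - x| / δ ≤ (|t-x|/δ)^2 := h3
          _ = (t-x)^2/δ^2 := by rw [div_pow, sq_abs]
      linarith
    calc |f t - f x| ≤ (N:ℝ) * modulus f δ := hsum
      _ ≤ (1 + (t-x)^2/δ^2) * modulus f δ := mul_le_mul_of_nonneg_right hNle hω

theorem kant_modulus_estimate (n : ℕ) (hn : 0 < n) (α β k : ℝ)
    (hα : 0 ≤ α) (hαβ : α ≤ β) (hk : 0 ≤ k)
    (f : ℝ → ℝ) (hf : ContinuousOn f (Set.Icc (0:ℝ) 1))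
    (x : ℝ) (hx : x ∈ Set.Icc (0:ℝ) 1) :
    |KantK n α β k f x - f x| ≤
      2 * modulus f (Real.sqrt (KantK n α β k (fun t => (t - x) ^ 2) x)) := by
  obtain ⟨hx0, hx1⟩ := hx
  have hxm : x ∈ Set.Icc (0:ℝ) 1 := ⟨hx0, hx1⟩
  have hnn : (0:ℝ) < n := by exact_mod_cast hn
  have hβ : 0 ≤ β := le_trans hα hαβ
  set N : ℝ := (n:ℝ) + β + 1 with hNdef
  have hN : (0:ℝ) < N := by rw [hNdef]; positivity
  have hP : 0 < pochK n k n := pochK_pos hnn hk n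
  set P : ℝ := pochK n k n with hPdef
  set w : ℕ → ℝ := fun m =>
    (n.choose m : ℝ) * pochK ((n:ℝ)*x) k m * pochK ((n:ℝ) - (n:ℝ)*x) k (n-m) with hw
  have hwnn : ∀ m, 0 ≤ w m := by
    intro m
    apply mul_nonneg (mul_nonneg (by positivity) (pochK_nonneg (by positivity) hk m))
    exact pochK_nonneg (by nlinarith) hk _
  have hwsum : ∑ m ∈ Finset.range (n+1), w m = P := by
    have h := pochK_vandermonde k ((n:ℝ)*x) ((n:ℝ) - (n:ℝ)*x) n
    rw [show (n:ℝ)*x + ((n:ℝ) - (n:ℝ)*x) = (n:ℝ) by ring] at h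
    exact h
  set A : ℕ → ℝ := fun m => ((m:ℝ) + α)/N with hA
  set B : ℕ → ℝ := fun m => ((m:ℝ) + α + 1)/N with hB
  have hAB : ∀ m, A m < B m := by
    intro m
    rw [hA, hB, div_lt_div_iff₀ hN hN]
    nlinarith
  have hA0 : ∀ m, 0 ≤ A m := by
    intro m; rw [hA]; positivity
  have hB1 : ∀ m, m ≤ n → B m ≤ 1 := by
    intro m hm
    rw [hB, div_le_one hN, hNdef]
    have : (m:ℝ) ≤ n := by exact_mod_cast hm
    linarith
  have hsub : ∀ m, m ≤ n → Set.uIcc (A m) (B m) ⊆ Set.Icc (0:ℝ) 1 := by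
    intro m hm
    rw [Set.uIcc_of_le (hAB m).le]
    rintro t ⟨h1, h2⟩
    exact ⟨le_trans (hA0 m) h1, le_trans h2 (hB1 m hm)⟩
  have hint : ∀ (g : ℝ → ℝ), ContinuousOn g (Set.Icc (0:ℝ) 1) → ∀ m, m ≤ n →
      IntervalIntegrable g MeasureTheory.volume (A m) (B m) := by
    intro g hg m hm
    exact (hg.mono (hsub m hm)).intervalIntegrable
  have hBA : ∀ m, B m - A m = 1/N := by
    intro m; rw [hA, hB]; field_simp; ring
  have hK : ∀ g : ℝ → ℝ, KantK n α β k g x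
      = (N / P) * ∑ m ∈ Finset.range (n+1), w m * ∫ t in (A m)..(B m), g t := by
    intro g; rfl
  -- Step 1 : rewrite the difference
  have step1 : KantK n α β k f x - f x
      = (N / P) * ∑ m ∈ Finset.range (n+1), w m * ∫ t in (A m)..(B m), (f t - f x) := by
    have e : ∀ m ∈ Finset.range (n+1),
        w m * ∫ t in (A m)..(B m), (f t - f x)
        = w m * (∫ t in (A m)..(B m), f t) - w m * (f x / N) := by
      intro m hm
      have hmn : m ≤ n := by
        have := Finset.mem_range.mp hm; omega
      rw [intervalIntegral.integral_sub (hint f hf m hmn) intervalIntegrable_const,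
        intervalIntegral.integral_const, hBA m, smul_eq_mul]
      ring
    rw [Finset.sum_congr rfl e, Finset.sum_sub_distrib, ← Finset.sum_mul, hwsum, hK f,
      mul_sub]
    have : N / P * (P * (f x / N)) = f x := by field_simp
    rw [this]
  -- positivity of the second moment
  set S : ℝ := KantK n α β k (fun t => (t - x)^2) x with hS
  have hJ : ∀ m, (∫ t in (A m)..(B m), (t-x)^2) = ((B m - x)^3 - (A m - x)^3)/3 := by
    intro m
    rw [intervalIntegral.integral_comp_sub_right (fun u => u^2) x, integral_pow]
    norm_num
  have hJpos : ∀ m, 0 < ∫ t in (A m)..(B m), (t-x)^2 := by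
    intro m
    rw [hJ m]
    have hlt : A m - x < B m - x := by linarith [hAB m]
    have h1 : 0 < (B m - x) - (A m - x) := by linarith
    have : (A m - x)^3 < (B m - x)^3 := by
      nlinarith [sq_nonneg ((A m - x) + (B m - x)), sq_nonneg (A m - x), sq_nonneg (B m - x),
        mul_pos h1 h1]
    linarith
  have hSexp : S = (N / P) * ∑ m ∈ Finset.range (n+1), w m * ∫ t in (A m)..(B m), (t-x)^2 := by
    rw [hS, hK]
  have hSpos : 0 < S := by
    obtain ⟨m₀, hm₀, hwm₀⟩ : ∃ m ∈ Finset.range (n+1), 0 < w m := by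
      by_contra hcon
      push_neg at hcon
      have h1 : ∑ m ∈ Finset.range (n+1), w m ≤ 0 := Finset.sum_nonpos hcon
      rw [hwsum] at h1
      linarith
    have hterm : 0 < w m₀ * ∫ t in (A m₀)..(B m₀), (t-x)^2 := mul_pos hwm₀ (hJpos m₀)
    have hsum' : w m₀ * (∫ t in (A m₀)..(B m₀), (t-x)^2)
        ≤ ∑ m ∈ Finset.range (n+1), w m * ∫ t in (A m)..(B m), (t-x)^2 :=
      Finset.single_le_sum (f := fun m => w m * ∫ t in (A m)..(B m), (t-x)^2)
        (fun i _ => mul_nonneg (hwnn i) (hJpos i).le) hm₀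
    rw [hSexp]
    exact mul_pos (by positivity) (lt_of_lt_of_le hterm hsum')
  set δ : ℝ := Real.sqrt S with hδdef
  have hδ : 0 < δ := Real.sqrt_pos.mpr hSpos
  have hδ2 : δ^2 = S := Real.sq_sqrt hSpos.le
  set ω : ℝ := modulus f δ with hω
  have hωnn : 0 ≤ ω := modulus_nonneg f hf hδ.le
  -- per-term bound
  have bound_m : ∀ m ∈ Finset.range (n+1),
      w m * |∫ t in (A m)..(B m), (f t - f x)|
      ≤ w m * (ω/N + (ω/δ^2) * ∫ t in (A m)..(B m), (t-x)^2) := by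
    intro m hm
    have hmn : m ≤ n := by
      have := Finset.mem_range.mp hm; omega
    apply mul_le_mul_of_nonneg_left _ (hwnn m)
    have h1 : |∫ t in (A m)..(B m), (f t - f x)| ≤ ∫ t in (A m)..(B m), |f t - f x| :=
      intervalIntegral.abs_integral_le_integral_abs (hAB m).le
    have h2 : (∫ t in (A m)..(B m), |f t - f x|)
        ≤ ∫ t in (A m)..(B m), (1 + (t-x)^2/δ^2) * ω := by
      apply intervalIntegral.integral_mono_on (hAB m).le
      · exact hint _ ((hf.sub continuousOn_const).abs) m hmn
      · apply Continuous.intervalIntegrable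
        exact (continuous_const.add (((continuous_id.sub continuous_const).pow 2).div_const _)).mul continuous_const
      · intro t ht
        have htm : t ∈ Set.Icc (0:ℝ) 1 :=
          hsub m hmn (by rw [Set.uIcc_of_le (hAB m).le]; exact ht)
        exact key_pointwise f hf hxm htm hδ
    have h3 : (∫ t in (A m)..(B m), (1 + (t-x)^2/δ^2) * ω)
        = ω/N + (ω/δ^2) * ∫ t in (A m)..(B m), (t-x)^2 := by
      have he : ∀ t : ℝ, (1 + (t-x)^2/δ^2) * ω = ω + (ω/δ^2) * (t-x)^2 := by
        intro t
        field_simp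
      simp_rw [he]
      rw [intervalIntegral.integral_add intervalIntegrable_const
          ((by fun_prop : Continuous fun t : ℝ => ω / δ^2 * (t - x)^2).intervalIntegrable _ _),
        intervalIntegral.integral_const_mul, intervalIntegral.integral_const, hBA m,
        smul_eq_mul]
      ring
    linarith
  -- assemble
  have hNP : 0 < N / P := by positivity
  rw [step1]
  calc |(N / P) * ∑ m ∈ Finset.range (n+1), w m * ∫ t in (A m)..(B m), (f t - f x)|
      ≤ (N / P) * ∑ m ∈ Finset.range (n+1), w m * |∫ t in (A m)..(B m), (f t - f x)| := by
        rw [abs_mul, abs_of_pos hNP]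
        apply mul_le_mul_of_nonneg_left _ hNP.le
        calc |∑ m ∈ Finset.range (n+1), w m * ∫ t in (A m)..(B m), (f t - f x)|
            ≤ ∑ m ∈ Finset.range (n+1), |w m * ∫ t in (A m)..(B m), (f t - f x)| :=
              Finset.abs_sum_le_sum_abs _ _
          _ = ∑ m ∈ Finset.range (n+1), w m * |∫ t in (A m)..(B m), (f t - f x)| := by
              apply Finset.sum_congr rfl
              intro m hm
              rw [abs_mul, abs_of_nonneg (hwnn m)]
    _ ≤ (N / P) * ∑ m ∈ Finset.range (n+1),
          w m * (ω/N + (ω/δ^2) * ∫ t in (A m)..(B m), (t-x)^2) :=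
        mul_le_mul_of_nonneg_left (Finset.sum_le_sum bound_m) hNP.le
    _ = ω + (ω/δ^2) * S := by
        have expand : ∑ m ∈ Finset.range (n+1),
            w m * (ω/N + (ω/δ^2) * ∫ t in (A m)..(B m), (t-x)^2)
            = (ω/N) * (∑ m ∈ Finset.range (n+1), w m)
              + (ω/δ^2) * ∑ m ∈ Finset.range (n+1), w m * ∫ t in (A m)..(B m), (t-x)^2 := by
          rw [Finset.mul_sum, Finset.mul_sum, ← Finset.sum_add_distrib]
          apply Finset.sum_congr rfl
          intro m hm
          ring
        rw [expand, hwsum, mul_add, hSexp]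
        have : N / P * (ω / N * P) = ω := by field_simp
        rw [this]
        ring
    _ = 2 * ω := by
        rw [hδ2]
        field_simp
        ring
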